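/- Let $K:[0,1]\to\mathbb{R}$ with $g_K(s) = sK(s)$ such that $g_K'$ and $g_K''$ are bounded by $M$ on $(0,1)$, and let $p \in (0,1)$. With $u_{j,k} = j/(k+1)$, define $d_{i,k}(g_K) := \frac{1}{i}\sum_{j=2}^{i} u_{j,k}^{p-1} g_K'(u_{j,k}^p) - u_{i,k}^{-1}\int_0^{u_{i,k}} s^{p-1} g_K'(s^p)\, ds$. Then there exists a constant $C = C(K,p) > 0$ such that $|d_{i,k}(g_K)| \le C\, u_{i,k}^{-1} (k+1)^{-p}$ for all $2 \le i \le k$. -/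

import Mathlib

/-!
Write `f s = s ^ (p - 1) * g' (s ^ p)` and `h = 1 / (k + 1)`, so that `u_{j,k} = j h`. The error
`h ∑ f (j h) - ∫₀^{ih} f` splits over the cells `[(j - 1) h, j h]`, `2 ≤ j ≤ i`, and the first
cell `[0, h]`. On a cell the mean value theorem together with `|f' s| ≤ M s ^ (p - 2)` bounds the
right-endpoint error by `M ((j - 1) h) ^ (p - 2) h ^ 2 = M (j - 1) ^ (p - 2) h ^ p`, summable in `j`
since `p - 2 < -1`; on the first cell `|f s| ≤ M s ^ (p - 1)` integrates to `M h ^ p / p`.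
Dividing by `u_{i,k}` gives the claim.
-/

open MeasureTheory

theorem abs_mul_sub_integral_le_of_abs_deriv_le {f f' : ℝ → ℝ} {a b L : ℝ} (hab : a ≤ b)
    (hf : ∀ x ∈ Set.Icc a b, HasDerivWithinAt f (f' x) (Set.Icc a b) x)
    (hf' : ∀ x ∈ Set.Icc a b, |f' x| ≤ L) :
    |(b - a) * f b - ∫ x in a..b, f x| ≤ L * (b - a) ^ 2 := by
  have hint : IntervalIntegrable f volume a b := by
    refine ContinuousOn.intervalIntegrable ?_
    rw [Set.uIcc_of_le hab]
    exact fun x hx => (hf x hx).continuousWithinAt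
  have hmvt : ∀ x ∈ Set.Icc a b, |f b - f x| ≤ L * (b - a) := fun x hx => by
    have h := Convex.norm_image_sub_le_of_norm_hasDerivWithin_le hf hf' (convex_Icc a b) hx
      (Set.right_mem_Icc.2 hab)
    rw [Real.norm_eq_abs, Real.norm_eq_abs, abs_of_nonneg (sub_nonneg.2 hx.2)] at h
    exact h.trans (mul_le_mul_of_nonneg_left (by linarith [hx.1])
      ((abs_nonneg _).trans (hf' a ⟨le_rfl, hab⟩)))
  calc |(b - a) * f b - ∫ x in a..b, f x| = ‖∫ x in a..b, (f b - f x)‖ := by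
        rw [intervalIntegral.integral_sub intervalIntegrable_const hint,
          intervalIntegral.integral_const, smul_eq_mul, Real.norm_eq_abs]
    _ ≤ L * (b - a) * |b - a| := by
        refine intervalIntegral.norm_integral_le_of_norm_le_const fun x hx => ?_
        rw [Set.uIoc_of_le hab] at hx
        exact hmvt x ⟨hx.1.le, hx.2⟩
    _ = L * (b - a) ^ 2 := by rw [abs_of_nonneg (sub_nonneg.2 hab)]; ring

theorem intervalIntegrable_of_abs_le_rpow {f : ℝ → ℝ} {a p M : ℝ} (hp : 0 < p) (ha : 0 ≤ a)
    (hf : ContinuousOn f (Set.Ioc 0 a)) (hbound : ∀ s ∈ Set.Ioc 0 a, |f s| ≤ M * s ^ (p - 1)) :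
    IntervalIntegrable f volume 0 a := by
  rw [intervalIntegrable_iff_integrableOn_Ioc_of_le ha]
  refine Integrable.mono' (g := fun s => M * s ^ (p - 1)) ?_
    (hf.aestronglyMeasurable measurableSet_Ioc)
    ((ae_restrict_mem measurableSet_Ioc).mono hbound)
  exact (intervalIntegrable_iff_integrableOn_Ioc_of_le ha).1
    ((intervalIntegral.intervalIntegrable_rpow' (by linarith)).const_mul M)

theorem abs_integral_le_of_abs_le_rpow {f : ℝ → ℝ} {a p M : ℝ} (hp : 0 < p) (ha : 0 ≤ a)
    (hbound : ∀ s ∈ Set.Ioc 0 a, |f s| ≤ M * s ^ (p - 1)) :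
    |∫ s in 0..a, f s| ≤ M * a ^ p / p := by
  have h := intervalIntegral.norm_integral_le_of_norm_le ha
    (Filter.Eventually.of_forall fun s hs => by rw [Real.norm_eq_abs]; exact hbound s hs)
    ((intervalIntegral.intervalIntegrable_rpow' (by linarith : -1 < p - 1)).const_mul M)
  rwa [intervalIntegral.integral_const_mul, integral_rpow (Or.inl (by linarith)), sub_add_cancel,
    Real.zero_rpow hp.ne', sub_zero, ← mul_div_assoc] at h

theorem riemann_sum_sub_integral_eq_sum_cells {f : ℝ → ℝ} {h : ℝ} (hh : 0 ≤ h) {i : ℕ}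
    (hi : 1 ≤ i) (hf : IntervalIntegrable f volume 0 (i * h)) :
    h * ∑ j ∈ Finset.Icc 2 i, f (j * h) - ∫ x in 0..i * h, f x
      = ∑ j ∈ Finset.Icc 2 i, (h * f (j * h) - ∫ x in (j - 1) * h..j * h, f x)
        - ∫ x in 0..h, f x := by
  induction i, hi using Nat.le_induction with
  | base => simp
  | succ n hn ih =>
    have hmono : (n : ℝ) * h ≤ (n + 1) * h := by nlinarith
    push_cast at hf ⊢
    have h0 : IntervalIntegrable f volume 0 (n * h) :=
      hf.mono_set (Set.uIcc_subset_uIcc_left (Set.mem_uIcc_of_le (by positivity) hmono))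
    have h1 : IntervalIntegrable f volume (n * h) ((n + 1) * h) :=
      hf.mono_set (Set.uIcc_subset_uIcc_right (Set.mem_uIcc_of_le (by positivity) hmono))
    rw [Finset.sum_Icc_succ_top (by omega), Finset.sum_Icc_succ_top (by omega),
      ← intervalIntegral.integral_add_adjacent_intervals h0 h1]
    push_cast
    rw [add_sub_cancel_right]
    linarith [ih h0]

theorem sum_Icc_two_rpow_sub_one_le_tsum {r : ℝ} (hr : r < -1) (i : ℕ) :
    ∑ j ∈ Finset.Icc 2 i, ((j : ℝ) - 1) ^ r ≤ ∑' n : ℕ, (n : ℝ) ^ r := by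
  have hinj : Set.InjOn (fun j : ℕ => j - 1) (Finset.Icc 2 i : Finset ℕ) := by
    intro j hj l hl hjl
    simp only [Finset.coe_Icc, Set.mem_Icc] at hj hl
    simp only at hjl
    omega
  calc ∑ j ∈ Finset.Icc 2 i, ((j : ℝ) - 1) ^ r
      = ∑ n ∈ (Finset.Icc 2 i).image (fun j : ℕ => j - 1), ((n : ℕ) : ℝ) ^ r := by
        rw [Finset.sum_image hinj]
        refine Finset.sum_congr rfl fun j hj => ?_
        rw [Nat.cast_sub (by simp at hj; omega), Nat.cast_one]
    _ ≤ ∑' n : ℕ, (n : ℝ) ^ r :=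
        (Real.summable_nat_rpow.2 hr).sum_le_tsum _ fun n _ => by positivity

theorem hasDerivAt_rpow_sub_one_mul_comp_rpow {g g' : ℝ → ℝ} {p s : ℝ} (hs : 0 < s)
    (hg : HasDerivAt g (g' (s ^ p)) (s ^ p)) :
    HasDerivAt (fun x => x ^ (p - 1) * g (x ^ p))
      ((p - 1) * s ^ (p - 2) * g (s ^ p) + s ^ (p - 1) * (g' (s ^ p) * (p * s ^ (p - 1)))) s := by
  have hpow : HasDerivAt (fun x : ℝ => x ^ (p - 1)) ((p - 1) * s ^ (p - 2)) s := by
    simpa only [show p - 1 - 1 = p - 2 by ring] using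
      Real.hasDerivAt_rpow_const (p := p - 1) (Or.inl hs.ne')
  exact hpow.mul (hg.comp s (Real.hasDerivAt_rpow_const (Or.inl hs.ne')))

theorem abs_deriv_rpow_sub_one_mul_comp_rpow_le {p s x y M : ℝ} (hp0 : 0 ≤ p) (hp1 : p ≤ 1)
    (hs0 : 0 < s) (hs1 : s ≤ 1) (hx : |x| ≤ M) (hy : |y| ≤ M) :
    |(p - 1) * s ^ (p - 2) * x + s ^ (p - 1) * (y * (p * s ^ (p - 1)))| ≤ M * s ^ (p - 2) := by
  have hsq : s ^ (p - 1) * s ^ (p - 1) ≤ s ^ (p - 2) := by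
    rw [← Real.rpow_add hs0]
    exact Real.rpow_le_rpow_of_exponent_ge hs0 hs1 (by linarith)
  have hpos1 : 0 ≤ s ^ (p - 1) := by positivity
  have hpos2 : 0 ≤ s ^ (p - 2) := by positivity
  calc |(p - 1) * s ^ (p - 2) * x + s ^ (p - 1) * (y * (p * s ^ (p - 1)))|
      ≤ (1 - p) * s ^ (p - 2) * |x| + p * (s ^ (p - 1) * s ^ (p - 1)) * |y| := by
        refine (abs_add_le _ _).trans (le_of_eq ?_)
        rw [abs_mul, abs_mul, abs_mul, abs_mul, abs_mul, abs_of_nonpos (by linarith : p - 1 ≤ 0),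
          abs_of_nonneg hpos1, abs_of_nonneg hpos2, abs_of_nonneg hp0]
        ring
    _ ≤ (1 - p) * s ^ (p - 2) * M + p * s ^ (p - 2) * M := by gcongr
    _ = M * s ^ (p - 2) := by ring

section RpowSubstitution

variable {g g' : ℝ → ℝ} {p M : ℝ}

theorem abs_cell_error_rpow_comp_le (hp : 0 < p) (hp1 : p < 1)
    (hderiv : ∀ s ∈ Set.Ioo (0 : ℝ) 1, HasDerivAt g (g' s) s)
    (hbd : ∀ s ∈ Set.Ioo (0 : ℝ) 1, |g s| ≤ M)
    (hbd' : ∀ s ∈ Set.Ioo (0 : ℝ) 1, |g' s| ≤ M)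
    {a b : ℝ} (ha : 0 < a) (hab : a ≤ b) (hb : b < 1) :
    |(b - a) * (b ^ (p - 1) * g (b ^ p)) - ∫ s in a..b, s ^ (p - 1) * g (s ^ p)|
      ≤ M * a ^ (p - 2) * (b - a) ^ 2 := by
  have hmem : ∀ x ∈ Set.Icc a b, x ^ p ∈ Set.Ioo (0 : ℝ) 1 := fun x hx =>
    ⟨Real.rpow_pos_of_pos (ha.trans_le hx.1) p,
      Real.rpow_lt_one (ha.le.trans hx.1) (hx.2.trans_lt hb) hp⟩
  have hM : 0 ≤ M := (abs_nonneg _).trans (hbd _ (hmem a ⟨le_rfl, hab⟩))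
  refine abs_mul_sub_integral_le_of_abs_deriv_le hab (fun x hx =>
    (hasDerivAt_rpow_sub_one_mul_comp_rpow (ha.trans_le hx.1)
      (hderiv _ (hmem x hx))).hasDerivWithinAt) fun x hx => ?_
  calc _ ≤ M * x ^ (p - 2) :=
        abs_deriv_rpow_sub_one_mul_comp_rpow_le hp.le hp1.le (ha.trans_le hx.1)
          (hx.2.trans hb.le) (hbd _ (hmem x hx)) (hbd' _ (hmem x hx))
    _ ≤ M * a ^ (p - 2) :=
        mul_le_mul_of_nonneg_left (Real.rpow_le_rpow_of_nonpos ha hx.1 (by linarith)) hM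

theorem abs_grid_cell_error_rpow_comp_le (hp : 0 < p) (hp1 : p < 1)
    (hderiv : ∀ s ∈ Set.Ioo (0 : ℝ) 1, HasDerivAt g (g' s) s)
    (hbd : ∀ s ∈ Set.Ioo (0 : ℝ) 1, |g s| ≤ M)
    (hbd' : ∀ s ∈ Set.Ioo (0 : ℝ) 1, |g' s| ≤ M)
    {h : ℝ} {j : ℕ} (hh : 0 < h) (hj : 2 ≤ j) (hjh : j * h < 1) :
    |h * ((j * h) ^ (p - 1) * g ((j * h) ^ p))
        - ∫ s in (j - 1) * h..j * h, s ^ (p - 1) * g (s ^ p)|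
      ≤ M * ((j : ℝ) - 1) ^ (p - 2) * h ^ p := by
  have hj1 : (1 : ℝ) < j := by exact_mod_cast hj
  have hcell := abs_cell_error_rpow_comp_le hp hp1 hderiv hbd hbd'
    (mul_pos (sub_pos.2 hj1) hh) (by nlinarith) hjh
  rw [show (j : ℝ) * h - (j - 1) * h = h by ring] at hcell
  refine hcell.trans (le_of_eq ?_)
  rw [Real.mul_rpow (by linarith) hh.le, mul_assoc, mul_assoc, mul_assoc,
    ← Real.rpow_natCast h 2, ← Real.rpow_add hh]
  norm_num

theorem abs_riemann_sum_rpow_comp_sub_integral_le (hp : 0 < p) (hp1 : p < 1)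
    (hderiv : ∀ s ∈ Set.Ioo (0 : ℝ) 1, HasDerivAt g (g' s) s)
    (hbd : ∀ s ∈ Set.Ioo (0 : ℝ) 1, |g s| ≤ M)
    (hbd' : ∀ s ∈ Set.Ioo (0 : ℝ) 1, |g' s| ≤ M)
    {h : ℝ} {i : ℕ} (hh : 0 < h) (hi : 1 ≤ i) (hih : i * h < 1) :
    |h * ∑ j ∈ Finset.Icc 2 i, (j * h) ^ (p - 1) * g ((j * h) ^ p)
        - ∫ s in 0..i * h, s ^ (p - 1) * g (s ^ p)|
      ≤ (M * ∑' n : ℕ, (n : ℝ) ^ (p - 2) + M / p) * h ^ p := by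
  have hM : 0 ≤ M := (abs_nonneg _).trans (hbd (1 / 2) ⟨by norm_num, by norm_num⟩)
  have hmem : ∀ s ∈ Set.Ioc 0 (i * h),
      s ∈ Set.Ioo (0 : ℝ) 1 ∧ s ^ p ∈ Set.Ioo (0 : ℝ) 1 :=
    fun s hs => ⟨⟨hs.1, hs.2.trans_lt hih⟩,
      Real.rpow_pos_of_pos hs.1 p, Real.rpow_lt_one hs.1.le (hs.2.trans_lt hih) hp⟩
  have hbound : ∀ s ∈ Set.Ioc 0 (i * h), |s ^ (p - 1) * g (s ^ p)| ≤ M * s ^ (p - 1) := by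
    intro s hs
    rw [abs_mul, abs_of_nonneg (by have := hs.1; positivity), mul_comm]
    exact mul_le_mul_of_nonneg_right (hbd _ (hmem s hs).2) (by have := hs.1; positivity)
  have hint : IntervalIntegrable (fun s => s ^ (p - 1) * g (s ^ p)) volume 0 (i * h) :=
    intervalIntegrable_of_abs_le_rpow hp (by positivity) (fun s hs =>
      (hasDerivAt_rpow_sub_one_mul_comp_rpow hs.1
        (hderiv _ (hmem s hs).2)).continuousAt.continuousWithinAt) hbound
  have hh_le : h ≤ i * h := le_mul_of_one_le_left hh.le (by exact_mod_cast hi)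
  have hfirst : |∫ s in 0..h, s ^ (p - 1) * g (s ^ p)| ≤ M * h ^ p / p :=
    abs_integral_le_of_abs_le_rpow hp hh.le fun s hs => hbound s ⟨hs.1, hs.2.trans hh_le⟩
  have hgrid : ∀ j ∈ Finset.Icc 2 i, (j : ℝ) * h < 1 := fun j hj =>
    lt_of_le_of_lt (by gcongr; exact_mod_cast (Finset.mem_Icc.1 hj).2) hih
  rw [riemann_sum_sub_integral_eq_sum_cells hh.le hi hint]
  calc _ ≤ ∑ j ∈ Finset.Icc 2 i,
          |h * ((j * h) ^ (p - 1) * g ((j * h) ^ p))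
            - ∫ s in (j - 1) * h..j * h, s ^ (p - 1) * g (s ^ p)|
        + |∫ s in 0..h, s ^ (p - 1) * g (s ^ p)| :=
        (abs_sub _ _).trans (add_le_add_left (Finset.abs_sum_le_sum_abs _ _) _)
    _ ≤ ∑ j ∈ Finset.Icc 2 i, M * ((j : ℝ) - 1) ^ (p - 2) * h ^ p + M * h ^ p / p :=
        add_le_add (Finset.sum_le_sum fun j hj => abs_grid_cell_error_rpow_comp_le hp hp1
          hderiv hbd hbd' hh (Finset.mem_Icc.1 hj).1 (hgrid j hj)) hfirst
    _ ≤ M * (∑' n : ℕ, (n : ℝ) ^ (p - 2)) * h ^ p + M * h ^ p / p := by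
        rw [← Finset.sum_mul, ← Finset.mul_sum]
        gcongr
        exact sum_Icc_two_rpow_sub_one_le_tsum (by linarith) i
    _ = (M * ∑' n : ℕ, (n : ℝ) ^ (p - 2) + M / p) * h ^ p := by ring

end RpowSubstitution

theorem kernel_riemann_sum_error_general (g' g'' : ℝ → ℝ) (p M : ℝ)
    (hp : 0 < p) (hp1 : p < 1) (hM : 0 < M)
    (hderiv2 : ∀ s ∈ Set.Ioo (0 : ℝ) 1, HasDerivAt g' (g'' s) s)
    (hbd1 : ∀ s ∈ Set.Ioo (0 : ℝ) 1, |g' s| ≤ M)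
    (hbd2 : ∀ s ∈ Set.Ioo (0 : ℝ) 1, |g'' s| ≤ M) :
    ∃ C : ℝ, 0 < C ∧ ∀ k i : ℕ, 2 ≤ i → i ≤ k →
      |(1 / (i : ℝ)) * ∑ j ∈ Finset.Icc 2 i,
            ((j : ℝ) / ((k : ℝ) + 1)) ^ (p - 1) * g' (((j : ℝ) / ((k : ℝ) + 1)) ^ p)
          - ((i : ℝ) / ((k : ℝ) + 1))⁻¹ *
              ∫ s in (0 : ℝ)..((i : ℝ) / ((k : ℝ) + 1)), s ^ (p - 1) * g' (s ^ p)|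
        ≤ C * ((i : ℝ) / ((k : ℝ) + 1))⁻¹ * ((k : ℝ) + 1) ^ (-p) := by
  set C := M * ∑' n : ℕ, (n : ℝ) ^ (p - 2) + M / p
  have hC : 0 < C := add_pos_of_nonneg_of_pos
    (mul_nonneg hM.le (tsum_nonneg fun n => by positivity)) (div_pos hM hp)
  refine ⟨C, hC, fun k i hi hik => ?_⟩
  have hk : (0 : ℝ) < k + 1 := by positivity
  have hu : (0 : ℝ) < i / (k + 1) := by positivity
  have hik' : (i : ℝ) < k + 1 := by norm_cast; omega
  have hriemann := abs_riemann_sum_rpow_comp_sub_integral_le hp hp1 hderiv2 hbd1 hbd2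
    (inv_pos.2 hk) (by omega : 1 ≤ i) (by rwa [← div_eq_mul_inv, div_lt_one hk])
  simp only [← div_eq_mul_inv] at hriemann
  have hsplit : 1 / (i : ℝ) = ((i : ℝ) / (k + 1))⁻¹ * ((k : ℝ) + 1)⁻¹ := by field_simp
  rw [hsplit, mul_assoc, ← mul_sub, abs_mul, abs_of_pos (inv_pos.2 hu)]
  calc _ ≤ (i / ((k : ℝ) + 1))⁻¹ * (C * ((k : ℝ) + 1)⁻¹ ^ p) := by gcongr
    _ = C * (i / ((k : ℝ) + 1))⁻¹ * ((k : ℝ) + 1) ^ (-p) := by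
        rw [Real.inv_rpow hk.le, Real.rpow_neg hk.le]; ring

/-- Lemma 1 of the paper: for a kernel `K` with `g_K s = s K s` whose first and second
derivatives `g'`, `g''` are bounded by `M` on `(0,1)`, and `p ∈ (0,1)`, the weighted
Riemann sum error `d_{i,k}(g_K)` satisfies `|d_{i,k}(g_K)| ≤ C u_{i,k}⁻¹ (k+1)^(-p)`. -/
theorem kernel_riemann_sum_error (K g' g'' : ℝ → ℝ) (p M : ℝ)
    (hp : 0 < p) (hp1 : p < 1) (hM : 0 < M)
    (hderiv1 : ∀ s ∈ Set.Ioo (0 : ℝ) 1, HasDerivAt (fun x => x * K x) (g' s) s)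
    (hderiv2 : ∀ s ∈ Set.Ioo (0 : ℝ) 1, HasDerivAt g' (g'' s) s)
    (hbd1 : ∀ s ∈ Set.Ioo (0 : ℝ) 1, |g' s| ≤ M)
    (hbd2 : ∀ s ∈ Set.Ioo (0 : ℝ) 1, |g'' s| ≤ M) :
    ∃ C : ℝ, 0 < C ∧ ∀ k i : ℕ, 2 ≤ i → i ≤ k →
      |(1 / (i : ℝ)) * ∑ j ∈ Finset.Icc 2 i,
            ((j : ℝ) / ((k : ℝ) + 1)) ^ (p - 1) * g' (((j : ℝ) / ((k : ℝ) + 1)) ^ p)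
          - ((i : ℝ) / ((k : ℝ) + 1))⁻¹ *
              ∫ s in (0 : ℝ)..((i : ℝ) / ((k : ℝ) + 1)), s ^ (p - 1) * g' (s ^ p)|
        ≤ C * ((i : ℝ) / ((k : ℝ) + 1))⁻¹ * ((k : ℝ) + 1) ^ (-p) :=
  kernel_riemann_sum_error_general g' g'' p M hp hp1 hM hderiv2 hbd1 hbd2
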